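/- arXiv:1411.7890 — 2 statements merged into one kernel-verified Lean document; each statement's English description precedes it below -/
import Mathlib

section
/- Assume b_n > 1, and let J_2 ⊂ S be the monomial ideal with Mon(S∖J_2) = {u/x_n : u ∈ Mon(S∖I), x_n divides u}, so that dim S/J_2 = 0 and Δ(J_2) is a simplicial complex on 𝒮 ∖ {x_{n,b_n}}. Then the map sending a face F of link_{Δ(I)}(x_{n,1}) to the set obtained from F by replacing each vertex x_{n,j} ∈ F (necessarily j ≥ 2) by x_{n,j−1} is an isomorphism of simplicial complexes from link_{Δ(I)}(x_{n,1}) onto Δ(J_2). -/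
open MvPolynomial

noncomputable section

/-- The vertex set / variable set `𝒮` of the polarized ring `S^℘`: pairs `⟨i, j⟩` with
`1 ≤ i ≤ n`, `1 ≤ j ≤ b i`.  Here `j : Fin (b i)` encodes the paper's second index `j + 1`,
so the vertex `⟨i, j⟩` stands for the variable `x_{i, j+1}` of the paper. -/
abbrev PolVars (m : ℕ) (b : Fin m → ℕ) := Σ i : Fin m, Fin (b i)

/-- `I` is a monomial ideal, i.e. generated by monomials. -/
def IsMonomialIdeal {K : Type} [Field K] {m : ℕ} (I : Ideal (MvPolynomial (Fin m) K)) : Prop :=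
  ∃ A : Set (Fin m →₀ ℕ), I = Ideal.span ((fun c => (monomial c (1 : K))) '' A)

/-- The exponent vectors of the minimal monomial generators of a monomial ideal:
the exponent vectors of monomials of `I` that are minimal under divisibility. -/
def MinGens (K : Type) [Field K] {m : ℕ} (I : Ideal (MvPolynomial (Fin m) K)) :
    Set (Fin m →₀ ℕ) :=
  {c | (monomial c (1 : K)) ∈ I ∧ ∀ c' : Fin m →₀ ℕ, c' ≤ c → c' ≠ c →
      (monomial c' (1 : K)) ∉ I}

/-- The polarization `v^℘ = ∏_{i=1}^n ∏_{j=1}^{c_i} x_{i,j}` of the monomial `v = x^c`. -/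
def polMon (K : Type) [Field K] {m : ℕ} (b : Fin m → ℕ) (c : Fin m →₀ ℕ) :
    MvPolynomial (PolVars m b) K :=
  ∏ v ∈ Finset.univ.filter (fun v : PolVars m b => (v.2 : ℕ) < c v.1), X v

/-- The polarization `I^℘ ⊆ S^℘` of the monomial ideal `I`, generated by the
polarizations of the minimal monomial generators of `I`. -/
def polarIdeal (K : Type) [Field K] {m : ℕ} (b : Fin m → ℕ)
    (I : Ideal (MvPolynomial (Fin m) K)) : Ideal (MvPolynomial (PolVars m b) K) :=
  Ideal.span (polMon K b '' MinGens K I)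

/-- The squarefree monomial `x_{1,a_1+1} ⋯ x_{n,a_n+1} ∈ S^℘` associated with the
exponent vector `a` of a monomial `x^a ∈ Mon(S∖I)`. -/
def genL (K : Type) [Field K] {m : ℕ} (b : Fin m → ℕ) (a : Fin m →₀ ℕ) :
    MvPolynomial (PolVars m b) K :=
  ∏ v ∈ Finset.univ.filter (fun v : PolVars m b => (v.2 : ℕ) = a v.1), X v

/-- The ideal `L(I) ⊆ S^℘`, generated by the monomials `x_{1,a_1+1} ⋯ x_{n,a_n+1}`
with `x^a ∈ Mon(S∖I)`. -/
def LIdeal (K : Type) [Field K] {m : ℕ} (b : Fin m → ℕ)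
    (I : Ideal (MvPolynomial (Fin m) K)) : Ideal (MvPolynomial (PolVars m b) K) :=
  Ideal.span (genL K b '' {a | (monomial a (1 : K)) ∉ I})

/-- The monomial prime ideal `φ(x^a) = (x_{1,a_1+1}, …, x_{n,a_n+1}) ⊆ S^℘`. -/
def phiIdeal (K : Type) [Field K] {m : ℕ} (b : Fin m → ℕ) (a : Fin m →₀ ℕ) :
    Ideal (MvPolynomial (PolVars m b) K) :=
  Ideal.span ((fun v => (X v : MvPolynomial (PolVars m b) K)) ''
    {v : PolVars m b | (v.2 : ℕ) = a v.1})

/-- The set of faces of the simplicial complex `Δ(I)` on the vertex set `𝒮`, whose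
Stanley–Reisner ideal is `I^℘`: a finite set `F` of vertices is a face iff the
squarefree monomial `∏_{v ∈ F} v` does not belong to `I^℘`. -/
def facesDelta (K : Type) [Field K] {m : ℕ} (b : Fin m → ℕ)
    (I : Ideal (MvPolynomial (Fin m) K)) : Set (Finset (PolVars m b)) :=
  {F | (∏ v ∈ F, (X v : MvPolynomial (PolVars m b) K)) ∉ polarIdeal K b I}

/-- `F` is a facet (maximal face) of the simplicial complex (set of faces) `Δ`. -/
def IsFacetOf {V : Type} (Δ : Set (Finset V)) (F : Finset V) : Prop :=
  F ∈ Δ ∧ ∀ G ∈ Δ, F ⊆ G → F = G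

/-- Zero-dimensionality data for a monomial ideal: `I` is a proper monomial ideal and,
for each `i`, `b i ≥ 1` is the smallest positive integer with `x_i^{b i} ∈ I`
(equivalently, `dim S/I = 0` with the `b i` minimal). -/
def ZeroDimData (K : Type) [Field K] {m : ℕ} (b : Fin m → ℕ)
    (I : Ideal (MvPolynomial (Fin m) K)) : Prop :=
  IsMonomialIdeal I ∧ I ≠ ⊤ ∧ ∀ i : Fin m, 1 ≤ b i ∧
    (monomial (Finsupp.single i (b i)) (1 : K)) ∈ I ∧
    ∀ j : ℕ, j < b i → (monomial (Finsupp.single i j) (1 : K)) ∉ I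

/-- The deletion `del_Δ(v) = {G ∈ Δ : v ∉ G}`. -/
def delC {V : Type} (Δ : Set (Finset V)) (v : V) : Set (Finset V) :=
  {G ∈ Δ | v ∉ G}

/-- The link `link_Δ(v) = {G ∈ Δ : v ∉ G and G ∪ {v} ∈ Δ}`. -/
def linkC {V : Type} [DecidableEq V] (Δ : Set (Finset V)) (v : V) : Set (Finset V) :=
  {G ∈ Δ | v ∉ G ∧ insert v G ∈ Δ}

/-- Vertex decomposability of a simplicial complex (given as its set of faces):
`Δ` is vertex decomposable if it is a simplex, or it contains a vertex `v` such that
(i) every facet of `del_Δ(v)` is a facet of `Δ` (`v` is a shedding vertex), and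
(ii) both `del_Δ(v)` and `link_Δ(v)` are vertex decomposable. -/
inductive IsVertexDecomposable {V : Type} [DecidableEq V] : Set (Finset V) → Prop
  | simplex (F : Finset V) : IsVertexDecomposable {G | G ⊆ F}
  | shed (Δ : Set (Finset V)) (v : V) (hv : {v} ∈ Δ)
      (hshed : ∀ F : Finset V, IsFacetOf (delC Δ v) F → IsFacetOf Δ F)
      (hdel : IsVertexDecomposable (delC Δ v))
      (hlink : IsVertexDecomposable (linkC Δ v)) : IsVertexDecomposable Δ

/-- The vertex map replacing `x_{i₀,j}` by `x_{i₀,j-1}` and fixing all other vertices. -/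
def shiftDown {m : ℕ} {b : Fin m → ℕ} (i₀ : Fin m) (v : PolVars m b) : PolVars m b :=
  ⟨v.1, ⟨(v.2 : ℕ) - (if v.1 = i₀ then 1 else 0),
    Nat.lt_of_le_of_lt (Nat.sub_le _ _) v.2.isLt⟩⟩

/-- `set(u)` for a generator `u = genL a` of `L(I)` with respect to the order `r`:
the set of variables `x` of `S^℘` such that `x·u` lies in the ideal generated by the
generators of `L(I)` preceding `u`. -/
def setOfGen (K : Type) [Field K] {m : ℕ} (b : Fin m → ℕ)
    (I : Ideal (MvPolynomial (Fin m) K))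
    (r : (Fin m →₀ ℕ) → (Fin m →₀ ℕ) → Prop) (a : Fin m →₀ ℕ) : Set (PolVars m b) :=
  {v | ∃ a' : Fin m →₀ ℕ, (monomial a' (1 : K)) ∉ I ∧ r a' a ∧ a' ≠ a ∧
      genL K b a' ∣ X v * genL K b a}

/-- `J(u,i)`: the weakly increasing sequence of the second indices of the variables
`x_{i,·}` dividing the monomial with exponent vector `e` (counted with multiplicity). -/
def rowList {m : ℕ} {b : Fin m → ℕ} (e : PolVars m b →₀ ℕ) (i : Fin m) : List ℕ :=
  Multiset.sort (∑ j : Fin (b i), Multiset.replicate (e ⟨i, j⟩) (j : ℕ)) (· ≤ ·)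

/-- Lexicographic (weak) order on sequences of natural numbers. -/
def lexLE (l l' : List ℕ) : Prop := l = l' ∨ List.Lex (· < ·) l l'

/-- The exponent vectors of the (minimal) monomial generators of `L(I)^k`:
products of `k` generators of `L(I)`. -/
def GLkE (K : Type) [Field K] {m : ℕ} (b : Fin m → ℕ)
    (I : Ideal (MvPolynomial (Fin m) K)) (k : ℕ) : Set (PolVars m b →₀ ℕ) :=
  {e | ∃ f : Fin k → (Fin m →₀ ℕ), (∀ j, (monomial (f j) (1 : K)) ∉ I) ∧
      (monomial e (1 : K) : MvPolynomial (PolVars m b) K) = ∏ j, genL K b (f j)}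

/-- The depth of a module `M` with respect to the ideal `J`: the maximal length of an
`M`-regular sequence consisting of elements of `J`. -/
def myDepth (R : Type) [CommRing R] (J : Ideal R) (M : Type) [AddCommGroup M]
    [Module R M] : ℕ :=
  sSup {k : ℕ | ∃ rs : List R, rs.length = k ∧ (∀ r ∈ rs, r ∈ J) ∧
      RingTheory.Sequence.IsRegular M rs}

/-- `max{deg lcm(u_1, …, u_k) : u_1, …, u_k ∈ Mon(S∖I)}`; the degree of the lcm of the
monomials `x^{f 1}, …, x^{f k}` is `∑_i max_j (f j) i`. -/
def maxLcmDeg (K : Type) [Field K] {m : ℕ} (I : Ideal (MvPolynomial (Fin m) K))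
    (k : ℕ) : ℕ :=
  sSup {d : ℕ | ∃ f : Fin k → (Fin m →₀ ℕ), (∀ j, (monomial (f j) (1 : K)) ∉ I) ∧
      d = ∑ i : Fin m, Finset.univ.sup (fun j => (f j) i)}

/-!
A squarefree monomial `∏_{v ∈ F} v` lies in `J^℘` iff `F` contains the support
`{x_{i,j} : j ≤ d_i}` of the polarization of some `x^d ∈ J`. Away from the vertex `x_{n,1}`,
shifting row `n` down by one index turns the polarization support of `x^d` into that of
`x^d / x_n`. Hence a generator of `I^℘` dividing `x_{n,1} ∏_{v ∈ F} v` yields a generator of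
`J₂^℘` dividing the product over the shifted face, and conversely; the bound `d_n ≤ b_n` on
minimal generators of `I` keeps the shifted support away from `x_{n,b_n}`.
-/

open Finset

section Monomial

variable {K : Type} [Field K]

lemma monomial_mem_of_le {σ : Type} {J : Ideal (MvPolynomial σ K)} {d e : σ →₀ ℕ}
    (hd : monomial d (1 : K) ∈ J) (hde : d ≤ e) : monomial e (1 : K) ∈ J :=
  J.mem_of_dvd (monomial_dvd_monomial.mpr ⟨Or.inr hde, one_dvd _⟩) hd

lemma prod_X_eq_monomial {σ : Type} [DecidableEq σ] (F : Finset σ) :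
    ∏ v ∈ F, (X v : MvPolynomial σ K) = monomial (∑ v ∈ F, Finsupp.single v 1) 1 :=
  (monomial_sum_one F _).symm

lemma sum_single_one_le_iff {σ : Type} [DecidableEq σ] {F G : Finset σ} :
    ∑ v ∈ G, Finsupp.single v 1 ≤ ∑ v ∈ F, Finsupp.single v (1 : ℕ) ↔ G ⊆ F := by
  have hind : ∀ (F : Finset σ) w,
      (∑ v ∈ F, Finsupp.single v (1 : ℕ)) w = if w ∈ F then 1 else 0 := by
    intro F w
    simp [Finsupp.finsetSum_apply, Finsupp.single_apply]
  simp only [Finsupp.le_def, hind]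
  refine ⟨fun h w hw => ?_, fun h w => ?_⟩
  · by_contra hwF
    simpa [hw, hwF] using h w
  · by_cases hw : w ∈ G
    · simp [hw, h hw]
    · simp [hw]

variable {m : ℕ}

lemma exists_mem_minGens_le {J : Ideal (MvPolynomial (Fin m) K)} {d : Fin m →₀ ℕ}
    (hd : monomial d (1 : K) ∈ J) : ∃ e ∈ MinGens K J, e ≤ d := by
  obtain ⟨e, hed, he, hmin⟩ :=
    exists_minimal_le_of_wellFoundedLT (fun c => monomial c (1 : K) ∈ J) d hd
  exact ⟨e, ⟨he, fun c hce hne hc => hne (le_antisymm hce (hmin hc hce))⟩, hed⟩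

lemma le_of_mem_minGens {I : Ideal (MvPolynomial (Fin m) K)} {d : Fin m →₀ ℕ}
    (hd : d ∈ MinGens K I) {i : Fin m} {k : ℕ}
    (hk : monomial (Finsupp.single i k) (1 : K) ∈ I) : d i ≤ k := by
  by_contra! h
  have hle : d.update i k ≤ d := fun j => by
    rcases eq_or_ne j i with rfl | hj
    · simpa using h.le
    · simp [Finsupp.update_apply, hj]
  refine hd.2 _ hle (fun he => h.ne (by simpa using DFunLike.congr_fun he i))
    (monomial_mem_of_le hk fun j => ?_)
  rcases eq_or_ne j i with rfl | hj
  · simp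
  · simp [Finsupp.update_apply, hj]

end Monomial

section Polarization

variable {K : Type} [Field K] {m : ℕ} {b : Fin m → ℕ}

lemma PolVars.ext {v w : PolVars m b} (h₁ : v.1 = w.1) (h₂ : (v.2 : ℕ) = w.2) : v = w :=
  Sigma.ext h₁ ((Fin.heq_ext_iff (congrArg b h₁)).2 h₂)

variable (b) in
def polSupport (d : Fin m →₀ ℕ) : Finset (PolVars m b) :=
  univ.filter fun v => (v.2 : ℕ) < d v.1

lemma mem_polSupport {d : Fin m →₀ ℕ} {v : PolVars m b} :
    v ∈ polSupport b d ↔ (v.2 : ℕ) < d v.1 := by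
  simp [polSupport]

lemma polSupport_mono {d e : Fin m →₀ ℕ} (hde : d ≤ e) :
    polSupport b d ⊆ polSupport b e :=
  fun _ hv => mem_polSupport.2 ((mem_polSupport.1 hv).trans_le (hde _))

lemma prod_X_mem_polarIdeal_iff (J : Ideal (MvPolynomial (Fin m) K)) (F : Finset (PolVars m b)) :
    ∏ v ∈ F, (X v : MvPolynomial (PolVars m b) K) ∈ polarIdeal K b J ↔
      ∃ d ∈ MinGens K J, polSupport b d ⊆ F := by
  classical
  have hgens : polMon K b '' MinGens K J = (fun c => monomial c (1 : K)) ''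
      ((fun d => ∑ v ∈ polSupport b d, Finsupp.single v 1) '' MinGens K J) := by
    rw [Set.image_image]
    exact Set.image_congr fun d _ => prod_X_eq_monomial _
  rw [polarIdeal, hgens, prod_X_eq_monomial, mem_ideal_span_monomial_image]
  simp [support_monomial, sum_single_one_le_iff]

lemma prod_X_mem_polarIdeal_of_monomial_mem {J : Ideal (MvPolynomial (Fin m) K)}
    {F : Finset (PolVars m b)} {d : Fin m →₀ ℕ} (hd : monomial d (1 : K) ∈ J)
    (hdF : polSupport b d ⊆ F) :
    ∏ v ∈ F, (X v : MvPolynomial (PolVars m b) K) ∈ polarIdeal K b J := by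
  obtain ⟨e, he, hed⟩ := exists_mem_minGens_le hd
  exact (prod_X_mem_polarIdeal_iff J F).2 ⟨e, he, (polSupport_mono hed).trans hdF⟩

lemma mem_facesDelta_of_subset {J : Ideal (MvPolynomial (Fin m) K)}
    {F G : Finset (PolVars m b)} (hFG : F ⊆ G) (hG : G ∈ facesDelta K b J) :
    F ∈ facesDelta K b J := fun hF => hG <| by
  obtain ⟨d, hd, hdF⟩ := (prod_X_mem_polarIdeal_iff J F).1 hF
  exact (prod_X_mem_polarIdeal_iff J G).2 ⟨d, hd, hdF.trans hFG⟩

end Polarization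

section Shift

variable {m : ℕ} {b : Fin m → ℕ}

lemma shiftDown_of_fst_ne {i₀ : Fin m} {v : PolVars m b} (h : v.1 ≠ i₀) :
    shiftDown i₀ v = v :=
  PolVars.ext rfl (by simp [shiftDown, h])

variable {v₀ : PolVars m b}

lemma snd_ne_zero_of_ne (hv₀ : (v₀.2 : ℕ) = 0) {u : PolVars m b} (hu : u ≠ v₀)
    (h : u.1 = v₀.1) : (u.2 : ℕ) ≠ 0 :=
  fun h₀ => hu (PolVars.ext h (h₀.trans hv₀.symm))

lemma shiftDown_snd_add_one_lt (hv₀ : (v₀.2 : ℕ) = 0) {u : PolVars m b} (hu : u ≠ v₀)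
    (h : (shiftDown v₀.1 u).1 = v₀.1) : ((shiftDown v₀.1 u).2 : ℕ) + 1 < b v₀.1 := by
  have h₁ : u.1 = v₀.1 := h
  have := snd_ne_zero_of_ne hv₀ hu h₁
  have := u.2.isLt
  simp only [shiftDown, h₁, if_true] at this ⊢
  omega

lemma shiftDown_injOn (hv₀ : (v₀.2 : ℕ) = 0) :
    Set.InjOn (shiftDown v₀.1) ({v₀}ᶜ : Set (PolVars m b)) := by
  intro u hu w hw h
  have h₁ : u.1 = w.1 := by simpa [shiftDown] using congrArg Sigma.fst h
  have h₂ := congrArg (fun x : PolVars m b => (x.2 : ℕ)) h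
  simp only [shiftDown, ← h₁] at h₂
  refine PolVars.ext h₁ ?_
  by_cases hu₁ : u.1 = v₀.1
  · have := snd_ne_zero_of_ne hv₀ hu hu₁
    have := snd_ne_zero_of_ne hv₀ hw (h₁ ▸ hu₁)
    simp only [hu₁, if_true] at h₂
    omega
  · simpa [hu₁] using h₂

lemma exists_ne_shiftDown_eq (hv₀ : (v₀.2 : ℕ) = 0) {v : PolVars m b}
    (hv : v.1 = v₀.1 → (v.2 : ℕ) + 1 < b v₀.1) :
    ∃ u ≠ v₀, shiftDown v₀.1 u = v := by
  by_cases h : v.1 = v₀.1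
  · refine ⟨⟨v.1, ⟨v.2 + 1, (hv h).trans_eq (congrArg b h).symm⟩⟩, fun he => ?_,
      PolVars.ext rfl (by simp [shiftDown, h])⟩
    have := congrArg (fun x : PolVars m b => (x.2 : ℕ)) he
    simp [hv₀] at this
  · exact ⟨v, fun he => h (he ▸ rfl), shiftDown_of_fst_ne h⟩

lemma shiftDown_mem_polSupport_iff (hv₀ : (v₀.2 : ℕ) = 0) {c d : Fin m →₀ ℕ}
    (hcd : ∀ i, c i = d i - Finsupp.single v₀.1 1 i) {u : PolVars m b} (hu : u ≠ v₀) :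
    shiftDown v₀.1 u ∈ polSupport b c ↔ u ∈ polSupport b d := by
  simp only [mem_polSupport, shiftDown, hcd]
  by_cases h : u.1 = v₀.1
  · have := snd_ne_zero_of_ne hv₀ hu h
    simp only [h, if_true, Finsupp.single_eq_same]
    omega
  · simp [h]

lemma image_shiftDown_filter (hv₀ : (v₀.2 : ℕ) = 0) {G : Finset (PolVars m b)}
    (hG : ∀ v ∈ G, v.1 = v₀.1 → (v.2 : ℕ) + 1 < b v₀.1) :
    ({u | u ≠ v₀ ∧ shiftDown v₀.1 u ∈ G} : Finset (PolVars m b)).image (shiftDown v₀.1) =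
      G := by
  ext v
  simp only [mem_image, mem_filter, mem_univ, true_and]
  refine ⟨fun ⟨u, ⟨_, hu⟩, huv⟩ => huv ▸ hu, fun hv => ?_⟩
  obtain ⟨u, hu, rfl⟩ := exists_ne_shiftDown_eq hv₀ (hG v hv)
  exact ⟨u, ⟨hu, hv⟩, rfl⟩

end Shift

section Link

variable {K : Type} [Field K] {m : ℕ} {b : Fin m → ℕ} {v₀ : PolVars m b}
  {I J : Ideal (MvPolynomial (Fin m) K)}

lemma image_shiftDown_mem_facesDelta (hv₀ : (v₀.2 : ℕ) = 0)
    (hJI : ∀ c, monomial c (1 : K) ∈ J → monomial (c + Finsupp.single v₀.1 1) (1 : K) ∈ I)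
    {F : Finset (PolVars m b)} (hF : v₀ ∉ F) (hins : insert v₀ F ∈ facesDelta K b I) :
    F.image (shiftDown v₀.1) ∈ facesDelta K b J := by
  intro hmem
  obtain ⟨c, hc, hcF⟩ := (prod_X_mem_polarIdeal_iff J _).1 hmem
  refine hins (prod_X_mem_polarIdeal_of_monomial_mem (hJI c hc.1) fun u hu => ?_)
  rcases eq_or_ne u v₀ with rfl | hne
  · exact mem_insert_self _ _
  obtain ⟨w, hw, hwu⟩ :=
    mem_image.1 (hcF ((shiftDown_mem_polSupport_iff hv₀ (by simp) hne).2 hu))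
  exact mem_insert_of_mem (shiftDown_injOn hv₀ (ne_of_mem_of_not_mem hw hF) hne hwu ▸ hw)

lemma insert_mem_facesDelta_of_image_shiftDown (hv₀ : (v₀.2 : ℕ) = 0)
    (hb : monomial (Finsupp.single v₀.1 (b v₀.1)) (1 : K) ∈ I)
    (hIJ : ∀ c, monomial (c + Finsupp.single v₀.1 1) (1 : K) ∈ I → monomial c (1 : K) ∈ J)
    {F : Finset (PolVars m b)} (himg : F.image (shiftDown v₀.1) ∈ facesDelta K b J) :
    insert v₀ F ∈ facesDelta K b I := by
  intro hmem
  obtain ⟨d, hd, hdF⟩ := (prod_X_mem_polarIdeal_iff I _).1 hmem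
  have hdb := le_of_mem_minGens hd hb
  set c := d - Finsupp.single v₀.1 1 with hc
  have hcJ : monomial c (1 : K) ∈ J := hIJ c (monomial_mem_of_le hd.1 le_tsub_add)
  refine himg (prod_X_mem_polarIdeal_of_monomial_mem hcJ fun w hw => ?_)
  obtain ⟨u, hu, rfl⟩ := exists_ne_shiftDown_eq hv₀ (v := w) fun h => by
    have := mem_polSupport.1 hw
    simp [hc, h] at this
    omega
  have := hdF ((shiftDown_mem_polSupport_iff hv₀ (by simp [hc]) hu).1 hw)
  exact mem_image_of_mem _ ((mem_insert.1 this).resolve_left hu)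

end Link

theorem statement13_general {K : Type} [Field K] {n : ℕ} (b : Fin n → ℕ)
    (I : Ideal (MvPolynomial (Fin n) K)) (hI : ZeroDimData K b I)
    (i₀ : Fin n)
    (v₀ : PolVars n b) (hv₀₁ : v₀.1 = i₀) (hv₀₂ : (v₀.2 : ℕ) = 0)
    (J₂ : Ideal (MvPolynomial (Fin n) K))
    (hJ₂Mon : ∀ c : Fin n →₀ ℕ, (monomial c (1 : K)) ∉ J₂ ↔
      (monomial (c + Finsupp.single i₀ 1) (1 : K)) ∉ I) :
    Set.BijOn (fun F : Finset (PolVars n b) => F.image (shiftDown i₀))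
      (linkC (facesDelta K b I) v₀)
      {F : Finset (PolVars n b) | (∀ v ∈ F, v.1 = i₀ → (v.2 : ℕ) + 1 < b i₀) ∧
        (∏ v ∈ F, (X v : MvPolynomial (PolVars n b) K)) ∉ polarIdeal K b J₂} ∧
    Set.InjOn (shiftDown i₀)
      {v : PolVars n b | ∃ F ∈ linkC (facesDelta K b I) v₀, v ∈ F} := by
  subst hv₀₁
  have hJ c :
      monomial c (1 : K) ∈ J₂ ↔ monomial (c + Finsupp.single v₀.1 1) (1 : K) ∈ I :=
    not_iff_not.1 (hJ₂Mon c)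
  have hlink : ∀ F ∈ linkC (facesDelta K b I) v₀, F ∈ (univ.erase v₀).powerset :=
    fun F hF => mem_powerset.2 fun v hv =>
      mem_erase.2 ⟨ne_of_mem_of_not_mem hv hF.2.1, mem_univ v⟩
  have hinj : Set.InjOn (shiftDown v₀.1) (univ.erase v₀ : Finset (PolVars n b)) :=
    (shiftDown_injOn hv₀₂).mono fun v hv => (mem_erase.1 hv).1
  refine ⟨⟨?_, ?_, ?_⟩, ?_⟩
  · rintro F ⟨-, hv₀F, hins⟩
    refine ⟨?_, image_shiftDown_mem_facesDelta hv₀₂ (fun c => (hJ c).1) hv₀F hins⟩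
    simp only [mem_image]
    rintro _ ⟨u, hu, rfl⟩
    exact shiftDown_snd_add_one_lt hv₀₂ (ne_of_mem_of_not_mem hu hv₀F)
  · exact fun F₁ h₁ F₂ h₂ =>
      image_injOn_powerset_of_injOn hinj (hlink F₁ h₁) (hlink F₂ h₂)
  · rintro G ⟨hGrow, hGface⟩
    have hFG := image_shiftDown_filter hv₀₂ hGrow
    set F : Finset (PolVars n b) := {u | u ≠ v₀ ∧ shiftDown v₀.1 u ∈ G}
    have hv₀F : v₀ ∉ F := by simp [F]
    have hins := insert_mem_facesDelta_of_image_shiftDown hv₀₂ (hI.2.2 v₀.1).2.1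
      (fun c => (hJ c).2) (hFG ▸ hGface)
    exact ⟨F, ⟨mem_facesDelta_of_subset (subset_insert _ _) hins, hv₀F, hins⟩, hFG⟩
  · rintro u ⟨F, hF, hu⟩ w ⟨F', hF', hw⟩
    exact hinj (mem_powerset.1 (hlink F hF) hu) (mem_powerset.1 (hlink F' hF') hw)

/-- Assume `b_n > 1`, and let `J₂ ⊂ S` be the monomial ideal with
`Mon(S∖J₂) = {u/x_n : u ∈ Mon(S∖I), x_n ∣ u}` (so `dim S/J₂ = 0` and `Δ(J₂)` is a
simplicial complex on `𝒮 ∖ {x_{n,b_n}}`).  Then the map sending a face `F` of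
`link_{Δ(I)}(x_{n,1})` to the set obtained from `F` by replacing each vertex
`x_{n,j} ∈ F` (necessarily `j ≥ 2`) by `x_{n,j−1}` is an isomorphism of simplicial
complexes from `link_{Δ(I)}(x_{n,1})` onto `Δ(J₂)`: it is injective on the vertices
involved and a bijection from the faces of the link onto the faces of `Δ(J₂)`
(the subsets of `𝒮 ∖ {x_{n,b_n}}` whose monomial avoids `J₂^℘`). -/
theorem statement13 {K : Type} [Field K] {n : ℕ} (b : Fin n → ℕ)
    (I : Ideal (MvPolynomial (Fin n) K)) (hI : ZeroDimData K b I)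
    (i₀ : Fin n) (hi₀ : (i₀ : ℕ) = n - 1) (hbn : 1 < b i₀)
    (v₀ : PolVars n b) (hv₀₁ : v₀.1 = i₀) (hv₀₂ : (v₀.2 : ℕ) = 0)
    (J₂ : Ideal (MvPolynomial (Fin n) K)) (hJ₂mon : IsMonomialIdeal J₂)
    (hJ₂Mon : ∀ c : Fin n →₀ ℕ, (monomial c (1 : K)) ∉ J₂ ↔
      (monomial (c + Finsupp.single i₀ 1) (1 : K)) ∉ I) :
    Set.BijOn (fun F : Finset (PolVars n b) => F.image (shiftDown i₀))
      (linkC (facesDelta K b I) v₀)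
      {F : Finset (PolVars n b) | (∀ v ∈ F, v.1 = i₀ → (v.2 : ℕ) + 1 < b i₀) ∧
        (∏ v ∈ F, (X v : MvPolynomial (PolVars n b) K)) ∉ polarIdeal K b J₂} ∧
    Set.InjOn (shiftDown i₀)
      {v : PolVars n b | ∃ F ∈ linkC (facesDelta K b I) v₀, v ∈ F} :=
  statement13_general b I hI i₀ v₀ hv₀₁ hv₀₂ J₂ hJ₂Mon

end
end

section
/- Fix k ≥ 1 and a total order ≤ on G(L(I)^k) extending the partial order ≼. Let u_1, …, u_k ∈ Mon(S∖I) with u_j = x_1^{a_1(j)}⋯x_n^{a_n(j)}, and let u = ∏_{i=1}^n ∏_{j=1}^k x_{i, a_i(j)+1} be the corresponding minimal generator of L(I)^k. Set c_i = max{a_i(1),…,a_i(k)} for each i. Then the colon ideal ({w ∈ G(L(I)^k) : w < u}) : (u) equals the ideal generated by the variables {x_{i,j} : 1 ≤ i ≤ n, 1 ≤ j ≤ c_i}; in particular, its minimal number of generators equals deg lcm(u_1, …, u_k) = Σ_{i=1}^n c_i. -/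
open MvPolynomial

noncomputable section

/-!
The row sequence `J(u,i)` of `u = ∏_t genL (f t)` is the sorted list of the exponents
`f 1 i, …, f k i`, all at most `c_i`. Suppose a monomial `x^d` avoiding the variables
`x_{i,j}`, `j ≤ c_i`, satisfies `w ∣ x^d u` for an earlier generator `w`. Then below `c_i`
every row of `w` has at most as many entries of each value as the row of `u`, and since both
rows have length `k` and the row of `u` stops at `c_i`, this forces `J(u,i) ≤ J(w,i)`
lexicographically; hence `u ≼ w ≤ u`, so `w = u`. Conversely, for `j < c_i` lowering one
exponent `f t i = c_i` to `j` gives a generator `w` with `J(w,·) ≤ J(u,·)`, `w ≠ u` and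
`w ∣ x_{i,j+1} u`.
-/

open Finset

theorem List.not_lt_of_count_le_of_sorted {c : ℕ} :
    ∀ {l l' : List ℕ}, l.Pairwise (· ≤ ·) → l.length = l'.length → (∀ x ∈ l, x ≤ c) →
      (∀ j < c, l'.count j ≤ l.count j) → ¬ l' < l
  | [], _, _, _, _, _, hlt => by cases hlt
  | a :: t, _, hl, hlen, hc, hcount, hlt => by
    cases hlt with
    | nil => simp at hlen
    | @cons _ t' _ hlt' =>
      refine List.not_lt_of_count_le_of_sorted (List.pairwise_cons.mp hl).2 (by simpa using hlen)
        (fun x hx => hc x (List.mem_cons_of_mem _ hx)) (fun j hj => ?_) hlt'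
      have := hcount j hj
      rw [List.count_cons, List.count_cons] at this
      omega
    | @rel a' t' _ _ ha' =>
      -- `a'` occurs in `l'` but, being smaller than the head of the sorted list `l`, not in `l`
      have hnot : a' ∉ a :: t := fun hmem => by
        rcases List.mem_cons.mp hmem with rfl | hmem
        · exact lt_irrefl _ ha'
        · exact absurd ((List.pairwise_cons.mp hl).1 _ hmem) (not_le.mpr ha')
      have := hcount a' (ha'.trans_le (hc a List.mem_cons_self))
      rw [List.count_eq_zero.mpr hnot, List.count_cons_self] at this
      omega

theorem lexLE_sort_of_count_le {s s' : Multiset ℕ} {c : ℕ}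
    (hcard : Multiset.card s = Multiset.card s') (hc : ∀ x ∈ s, x ≤ c)
    (hcount : ∀ j < c, s'.count j ≤ s.count j) :
    lexLE (s.sort (· ≤ ·)) (s'.sort (· ≤ ·)) := by
  have hcount_sort : ∀ (m : Multiset ℕ) j, (m.sort (· ≤ ·)).count j = m.count j := fun m j => by
    rw [← Multiset.coe_count, Multiset.sort_eq]
  refine (le_of_not_gt (List.not_lt_of_count_le_of_sorted (Multiset.pairwise_sort _ _)
    (by simpa using hcard) (fun x hx => hc x ((Multiset.mem_sort _).mp hx))
    (fun j hj => ?_))).eq_or_lt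
  rw [hcount_sort, hcount_sort]
  exact hcount j hj

section MonomialIdeal

variable {σ R : Type*} [CommSemiring R] {I : Ideal (MvPolynomial σ R)}

theorem monomial_one_notMem_of_le {a a' : σ →₀ ℕ} (hle : a' ≤ a)
    (ha : monomial a (1 : R) ∉ I) : monomial a' (1 : R) ∉ I :=
  fun h => ha (I.mem_of_dvd (monomial_dvd_monomial.mpr ⟨Or.inr hle, one_dvd _⟩) h)

theorem apply_lt_of_monomial_single_mem {i : σ} {N : ℕ} {a : σ →₀ ℕ}
    (hN : monomial (Finsupp.single i N) (1 : R) ∈ I) (ha : monomial a (1 : R) ∉ I) :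
    a i < N := by
  by_contra! h
  exact monomial_one_notMem_of_le (Finsupp.single_le_iff.mpr h) ha hN

theorem colon_span_monomial_eq_span_X {P : Set (σ →₀ ℕ)} {e : σ →₀ ℕ} {C : Set σ}
    (hsub : ∀ p ∈ P, ∀ d, p ≤ d + e → ∃ v ∈ C, d v ≠ 0)
    (hsup : ∀ v ∈ C, ∃ p ∈ P, p ≤ Finsupp.single v 1 + e) :
    (Ideal.span ((fun s => monomial s (1 : R)) '' P)).colon (Ideal.span {monomial e (1 : R)})
      = Ideal.span (X '' C) := by
  apply le_antisymm
  · intro q hq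
    rw [Ideal.mem_colon_span_singleton, mem_ideal_span_monomial_image] at hq
    rw [mem_ideal_span_X_image]
    intro d hd
    have hde : d + e ∈ (q * monomial e 1).support := by
      rw [mem_support_iff, coeff_mul_monomial, mul_one]
      exact mem_support_iff.mp hd
    obtain ⟨p, hp, hle⟩ := hq _ hde
    exact hsub p hp d hle
  · rw [Ideal.span_le]
    rintro _ ⟨v, hv, rfl⟩
    obtain ⟨p, hp, hle⟩ := hsup v hv
    rw [SetLike.mem_coe, Ideal.mem_colon_span_singleton, X, monomial_mul, one_mul]
    exact Ideal.mem_of_dvd _ (monomial_dvd_monomial.mpr ⟨Or.inr hle, one_dvd _⟩)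
      (Ideal.subset_span ⟨p, hp, rfl⟩)

end MonomialIdeal

section Polarization

variable {K : Type} [Field K] {n : ℕ} {b : Fin n → ℕ} {k : ℕ}

def genLExp (b : Fin n → ℕ) (a : Fin n →₀ ℕ) : PolVars n b →₀ ℕ :=
  ∑ v ∈ univ.filter (fun v : PolVars n b => (v.2 : ℕ) = a v.1), Finsupp.single v 1

theorem genL_eq_monomial (a : Fin n →₀ ℕ) : genL K b a = monomial (genLExp b a) 1 := by
  rw [genL, genLExp, monomial_sum_one]
  rfl

theorem prod_genL_eq_monomial (f : Fin k → Fin n →₀ ℕ) :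
    ∏ t, genL K b (f t) = monomial (∑ t, genLExp b (f t)) 1 := by
  simp only [genL_eq_monomial, monomial_sum_one]

theorem sum_genLExp_mem_GLkE {I : Ideal (MvPolynomial (Fin n) K)} {f : Fin k → Fin n →₀ ℕ}
    (hf : ∀ t, monomial (f t) (1 : K) ∉ I) : ∑ t, genLExp b (f t) ∈ GLkE K b I k :=
  ⟨f, hf, (prod_genL_eq_monomial f).symm⟩

def rowMultiset (f : Fin k → Fin n →₀ ℕ) (i : Fin n) : Multiset ℕ :=
  univ.val.map fun t => f t i

theorem card_rowMultiset (f : Fin k → Fin n →₀ ℕ) (i : Fin n) :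
    Multiset.card (rowMultiset f i) = k := by
  simp [rowMultiset]

theorem genLExp_apply (a : Fin n →₀ ℕ) (v : PolVars n b) :
    genLExp b a v = if (v.2 : ℕ) = a v.1 then 1 else 0 := by
  simp [genLExp, Finsupp.finsetSum_apply, Finsupp.single_apply]

theorem sum_genLExp_apply (f : Fin k → Fin n →₀ ℕ) (v : PolVars n b) :
    (∑ t, genLExp b (f t)) v = (rowMultiset f v.1).count (v.2 : ℕ) := by
  simp only [Finsupp.finsetSum_apply, genLExp_apply, sum_boole, rowMultiset, Multiset.count_map]
  rfl

theorem rowList_sum_genLExp {f : Fin k → Fin n →₀ ℕ} {i : Fin n} (hf : ∀ t, f t i < b i) :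
    rowList (∑ t, genLExp b (f t)) i = (rowMultiset f i).sort (· ≤ ·) := by
  rw [rowList]
  congr 1
  ext x
  rw [Multiset.count_sum']
  simp only [Multiset.count_replicate, sum_genLExp_apply]
  rw [Fin.sum_univ_eq_sum_range (fun j => if j = x then (rowMultiset f i).count j else 0),
    Finset.sum_ite_eq', ite_eq_left_iff, eq_comm, Multiset.count_eq_zero, Finset.mem_range]
  intro hx hmem
  obtain ⟨t, -, rfl⟩ := Multiset.mem_map.mp hmem
  exact hx (hf t)

theorem rowList_le_of_count_le_below_sup {f f' : Fin k → Fin n →₀ ℕ} (hf : ∀ t i, f t i < b i)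
    (hf' : ∀ t i, f' t i < b i)
    (hle : ∀ v : PolVars n b, (v.2 : ℕ) < univ.sup (fun t => f t v.1) →
      (∑ t, genLExp b (f' t)) v ≤ (∑ t, genLExp b (f t)) v) (i : Fin n) :
    lexLE (rowList (∑ t, genLExp b (f t)) i) (rowList (∑ t, genLExp b (f' t)) i) := by
  rw [rowList_sum_genLExp (hf · i), rowList_sum_genLExp (hf' · i)]
  refine lexLE_sort_of_count_le (c := univ.sup fun t => f t i)
    (by rw [card_rowMultiset, card_rowMultiset]) (fun x hx => ?_) (fun j hj => ?_)
  · obtain ⟨t, -, rfl⟩ := Multiset.mem_map.mp hx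
    exact le_sup (f := fun t => f t i) (mem_univ t)
  · obtain ⟨t, -, hjt⟩ := Finset.lt_sup_iff.mp hj
    simpa only [sum_genLExp_apply] using hle ⟨i, ⟨j, hjt.trans (hf t i)⟩⟩ hj

theorem rowMultiset_update_add (f : Fin k → Fin n →₀ ℕ) (t₀ : Fin k)
    (a : Fin n →₀ ℕ) (i : Fin n) :
    rowMultiset (Function.update f t₀ a) i + {f t₀ i} = rowMultiset f i + {a i} := by
  have hmem : t₀ ∈ (univ : Finset (Fin k)).val := mem_univ t₀
  have hrest : ((univ : Finset (Fin k)).val.erase t₀).map (fun t => Function.update f t₀ a t i)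
      = ((univ : Finset (Fin k)).val.erase t₀).map (fun t => f t i) :=
    Multiset.map_congr rfl fun t ht => by
      rw [Function.update_of_ne (univ.nodup.mem_erase_iff.mp ht).1]
  rw [rowMultiset, rowMultiset, ← Multiset.cons_erase hmem, Multiset.map_cons, Multiset.map_cons,
    hrest, Function.update_self]
  simp only [← Multiset.singleton_add]
  abel

theorem exists_lower_generator {f : Fin k → Fin n →₀ ℕ} (hf : ∀ t i, f t i < b i)
    {i₀ : Fin n} {s : Fin (b i₀)} (hs : (s : ℕ) < univ.sup fun t => f t i₀) :
    ∃ g : Fin k → Fin n →₀ ℕ, (∀ t, g t ≤ f t) ∧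
      ∑ t, genLExp b (g t) ≤ Finsupp.single ⟨i₀, s⟩ 1 + ∑ t, genLExp b (f t) ∧
      ∑ t, genLExp b (g t) ≠ ∑ t, genLExp b (f t) ∧
      ∀ i, lexLE (rowList (∑ t, genLExp b (g t)) i) (rowList (∑ t, genLExp b (f t)) i) := by
  obtain ⟨t₀, -, hmax⟩ := exists_mem_eq_sup univ
    (univ_nonempty_iff.mpr ⟨(Finset.lt_sup_iff.mp hs).choose⟩) (fun t => f t i₀)
  rw [hmax] at hs
  set g := Function.update f t₀ ((f t₀).update i₀ s) with hg
  have hgf : g ≤ f := by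
    rw [hg, update_le_self_iff, ← Finsupp.coe_le_coe, Finsupp.coe_update]
    exact update_le_self_iff.mpr hs.le
  have hgb : ∀ t i, g t i < b i := fun t i => (hgf t i).trans_lt (hf t i)
  have hrow : ∀ i, rowMultiset g i + {f t₀ i} = rowMultiset f i + {(f t₀).update i₀ s i} :=
    rowMultiset_update_add f t₀ _
  have hrow_ne : ∀ i ≠ i₀, rowMultiset g i = rowMultiset f i := fun i hi => by
    simpa [Finsupp.update_apply, hi] using hrow i
  have hcount₀ : ∀ j : ℕ, (rowMultiset g i₀).count j + (if j = f t₀ i₀ then 1 else 0)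
      = (rowMultiset f i₀).count j + if j = s then 1 else 0 := fun j => by
    simpa [Multiset.count_singleton] using congrArg (Multiset.count j) (hrow i₀)
  refine ⟨g, hgf, fun ⟨i, j⟩ => ?_, fun heq => ?_, fun i => ?_⟩
  · rw [Finsupp.add_apply, sum_genLExp_apply, sum_genLExp_apply]
    rcases eq_or_ne i i₀ with rfl | hi
    · have := hcount₀ j
      simp only [Finsupp.single_apply, Sigma.mk.inj_iff, heq_eq_eq, true_and, Fin.ext_iff]
      split_ifs at this ⊢ <;> omega
    · rw [hrow_ne i hi]
      exact le_add_self
  · have := hcount₀ (f t₀ i₀)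
    have hc : (rowMultiset g i₀).count (f t₀ i₀) = (rowMultiset f i₀).count (f t₀ i₀) := by
      simpa only [sum_genLExp_apply] using DFunLike.congr_fun heq ⟨i₀, ⟨f t₀ i₀, hf t₀ i₀⟩⟩
    rw [if_pos rfl, if_neg hs.ne'] at this
    omega
  · rw [rowList_sum_genLExp (hgb · i), rowList_sum_genLExp (hf · i)]
    refine lexLE_sort_of_count_le (c := univ.sup fun t => f t i)
      (by rw [card_rowMultiset, card_rowMultiset]) (fun x hx => ?_) (fun j hj => ?_)
    · obtain ⟨t, -, rfl⟩ := Multiset.mem_map.mp hx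
      exact (hgf t i).trans (le_sup (f := fun t => f t i) (mem_univ t))
    · rcases eq_or_ne i i₀ with rfl | hi
      · have := hcount₀ j
        rw [← hmax, if_neg hj.ne] at this
        omega
      · rw [hrow_ne i hi]

theorem card_filter_lt_eq_sum {c : Fin n → ℕ} (hc : ∀ i, c i ≤ b i) :
    #(univ.filter fun v : PolVars n b => (v.2 : ℕ) < c v.1) = ∑ i, c i := by
  rw [card_filter, ← univ_sigma_univ, sum_sigma]
  refine sum_congr rfl fun i _ => ?_
  rw [← card_filter]
  exact Fin.card_filter_val_lt.trans (min_eq_right (hc i))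

end Polarization

theorem statement15_general {K : Type} [Field K] {n : ℕ} (b : Fin n → ℕ)
    (I : Ideal (MvPolynomial (Fin n) K)) (hI : ZeroDimData K b I)
    (k : ℕ)
    (r : (PolVars n b →₀ ℕ) → (PolVars n b →₀ ℕ) → Prop)
    (hantisymm : ∀ e ∈ GLkE K b I k, ∀ e' ∈ GLkE K b I k, r e e' → r e' e → e = e')
    (hext : ∀ e ∈ GLkE K b I k, ∀ e' ∈ GLkE K b I k,
      (∀ i : Fin n, lexLE (rowList e i) (rowList e' i)) → r e e')
    (f : Fin k → (Fin n →₀ ℕ)) (hf : ∀ j, (monomial (f j) (1 : K)) ∉ I)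
    (e : PolVars n b →₀ ℕ)
    (he : (monomial e (1 : K) : MvPolynomial (PolVars n b) K) = ∏ j, genL K b (f j)) :
    (Ideal.span {p : MvPolynomial (PolVars n b) K |
        ∃ e' ∈ GLkE K b I k, r e' e ∧ e' ≠ e ∧ p = monomial e' (1 : K)}).colon
      (Ideal.span {(monomial e (1 : K) : MvPolynomial (PolVars n b) K)})
    = Ideal.span ((fun v => (X v : MvPolynomial (PolVars n b) K)) ''
        {v : PolVars n b | (v.2 : ℕ) < Finset.univ.sup (fun j => (f j) v.1)}) ∧
    (Finset.univ.filter (fun v : PolVars n b =>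
        (v.2 : ℕ) < Finset.univ.sup (fun j => (f j) v.1))).card
      = ∑ i : Fin n, Finset.univ.sup (fun j => (f j) i) := by
  have hexp_lt {g : Fin k → Fin n →₀ ℕ} (hg : ∀ t, monomial (g t) (1 : K) ∉ I) (t i) : g t i < b i :=
    apply_lt_of_monomial_single_mem (hI.2.2 i).2.1 (hg t)
  have hP : {p | ∃ e' ∈ GLkE K b I k, r e' e ∧ e' ≠ e ∧ p = monomial e' (1 : K)}
      = (fun s => monomial s (1 : K)) '' {e' | e' ∈ GLkE K b I k ∧ r e' e ∧ e' ≠ e} :=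
    Set.ext fun _ => ⟨fun ⟨e', he', hr, hne, hp⟩ => ⟨e', ⟨he', hr, hne⟩, hp.symm⟩,
      fun ⟨e', ⟨he', hr, hne⟩, hp⟩ => ⟨e', he', hr, hne, hp.symm⟩⟩
  obtain rfl : e = ∑ t, genLExp b (f t) :=
    (monomial_left_inj one_ne_zero).mp (he.trans (prod_genL_eq_monomial f))
  rw [hP]
  refine ⟨?_, card_filter_lt_eq_sum fun i => Finset.sup_le fun t _ => (hexp_lt hf t i).le⟩
  refine colon_span_monomial_eq_span_X ?_ fun ⟨i, s⟩ hs => ?_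
  · rintro _ ⟨⟨f', hf', he'⟩, hr, hne⟩ d hle
    obtain rfl := (monomial_left_inj one_ne_zero).mp (he'.trans (prod_genL_eq_monomial f'))
    by_contra! hd
    have hrows := rowList_le_of_count_le_below_sup (hexp_lt hf) (hexp_lt hf')
      fun v hv => by simpa [hd v hv] using hle v
    exact hne (hantisymm _ (sum_genLExp_mem_GLkE hf') _ (sum_genLExp_mem_GLkE hf) hr
      (hext _ (sum_genLExp_mem_GLkE hf) _ (sum_genLExp_mem_GLkE hf') hrows))
  · obtain ⟨g, hgf, hle, hne, hrows⟩ := exists_lower_generator (hexp_lt hf) hs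
    have hg : ∀ t, monomial (g t) (1 : K) ∉ I := fun t => monomial_one_notMem_of_le (hgf t) (hf t)
    exact ⟨_, ⟨sum_genLExp_mem_GLkE hg,
      hext _ (sum_genLExp_mem_GLkE hg) _ (sum_genLExp_mem_GLkE hf) hrows, hne⟩, hle⟩

/-- Fix `k ≥ 1` and a total order on `G(L(I)^k)` extending `≼`.  Let
`u_1, …, u_k ∈ Mon(S∖I)` with `u_j = x^{f j}`, and let `u = ∏_i ∏_j x_{i,(f j) i + 1}` be
the corresponding minimal generator of `L(I)^k`; set `c_i = max_j (f j) i`.  Then the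
colon ideal `({w ∈ G(L(I)^k) : w < u}) : (u)` equals the ideal generated by the variables
`{x_{i,j} : 1 ≤ j ≤ c_i}`; in particular its minimal number of generators equals
`deg lcm(u_1, …, u_k) = Σ_i c_i`. -/
theorem statement15 {K : Type} [Field K] {n : ℕ} (b : Fin n → ℕ)
    (I : Ideal (MvPolynomial (Fin n) K)) (hI : ZeroDimData K b I)
    (k : ℕ) (hk : 1 ≤ k)
    (r : (PolVars n b →₀ ℕ) → (PolVars n b →₀ ℕ) → Prop)
    (hrefl : ∀ e ∈ GLkE K b I k, r e e)
    (hantisymm : ∀ e ∈ GLkE K b I k, ∀ e' ∈ GLkE K b I k, r e e' → r e' e → e = e')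
    (htrans : ∀ e ∈ GLkE K b I k, ∀ e' ∈ GLkE K b I k, ∀ e'' ∈ GLkE K b I k,
      r e e' → r e' e'' → r e e'')
    (htotal : ∀ e ∈ GLkE K b I k, ∀ e' ∈ GLkE K b I k, r e e' ∨ r e' e)
    (hext : ∀ e ∈ GLkE K b I k, ∀ e' ∈ GLkE K b I k,
      (∀ i : Fin n, lexLE (rowList e i) (rowList e' i)) → r e e')
    (f : Fin k → (Fin n →₀ ℕ)) (hf : ∀ j, (monomial (f j) (1 : K)) ∉ I)
    (e : PolVars n b →₀ ℕ)
    (he : (monomial e (1 : K) : MvPolynomial (PolVars n b) K) = ∏ j, genL K b (f j)) :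
    (Ideal.span {p : MvPolynomial (PolVars n b) K |
        ∃ e' ∈ GLkE K b I k, r e' e ∧ e' ≠ e ∧ p = monomial e' (1 : K)}).colon
      (Ideal.span {(monomial e (1 : K) : MvPolynomial (PolVars n b) K)})
    = Ideal.span ((fun v => (X v : MvPolynomial (PolVars n b) K)) ''
        {v : PolVars n b | (v.2 : ℕ) < Finset.univ.sup (fun j => (f j) v.1)}) ∧
    (Finset.univ.filter (fun v : PolVars n b =>
        (v.2 : ℕ) < Finset.univ.sup (fun j => (f j) v.1))).card
      = ∑ i : Fin n, Finset.univ.sup (fun j => (f j) i) :=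
  statement15_general b I hI k r hantisymm hext f hf e he

end
end
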